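/- Let φ : ℝ → ℝ be differentiable with φ(s) - s * φ'(s) ≠ 0 for all s in an open interval U containing some point, define Q(s) := φ'(s) / (φ(s) - s * φ'(s)). If there is a nonzero constant c with φ(s) - s * φ'(s) = c * (Q(s) - s * Q'(s)) for all s ∈ U, and Q is differentiable on U, then there exist constants c₁ ≠ 0 and c₂ such that Q(s) = c₁ * φ(s) + c₂ * s for all s ∈ U. -/

import Mathlib

/-!
Since `u - s u' = -s² (u / s)'` away from `0`, the relation `φ - s φ' = c (Q - s Q')` says that
`Q / s - c⁻¹ φ / s` has derivative zero on the interval, hence is a constant `c₂`.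
-/

theorem HasDerivAt.div_id {𝕜 : Type*} [RCLike 𝕜] {u : 𝕜 → 𝕜} {u' s : 𝕜}
    (hu : HasDerivAt u u' s) (hs : s ≠ 0) :
    HasDerivAt (fun x => u x / x) (-(u s - s * u') / s ^ 2) s :=
  (hu.div (hasDerivAt_id' s) hs).congr_deriv (by ring)

theorem IsOpen.exists_eq_mul_of_sub_mul_deriv_eq_zero {𝕜 : Type*} [RCLike 𝕜] {U : Set 𝕜}
    (hUo : IsOpen U) (hUc : IsPreconnected U) (h0 : (0 : 𝕜) ∉ U) {u u' : 𝕜 → 𝕜}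
    (hu : ∀ s ∈ U, HasDerivAt u (u' s) s) (hode : ∀ s ∈ U, u s - s * u' s = 0) :
    ∃ d : 𝕜, ∀ s ∈ U, u s = d * s := by
  have hs0 : ∀ s ∈ U, s ≠ 0 := fun s hs h => h0 (h ▸ hs)
  have hquot : ∀ s ∈ U, HasDerivAt (fun x => u x / x) 0 s := fun s hs => by
    simpa [hode s hs] using (hu s hs).div_id (hs0 s hs)
  obtain ⟨d, hd⟩ := hUo.exists_is_const_of_deriv_eq_zero hUc
    (fun s hs => (hquot s hs).differentiableAt.differentiableWithinAt)
    (fun s hs => (hquot s hs).deriv)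
  exact ⟨d, fun s hs => by rw [← hd s hs, div_mul_cancel₀ _ (hs0 s hs)]⟩

theorem stmt_2_general (A B : ℝ) (U : Set ℝ) (hU : U = Set.Ioo A B)
    (h0 : (0 : ℝ) ∉ U)
    (φ φ' Q Q' : ℝ → ℝ)
    (hφd : ∀ s ∈ U, HasDerivAt φ (φ' s) s)
    (hQd : ∀ s ∈ U, HasDerivAt Q (Q' s) s)
    (c : ℝ) (hc : c ≠ 0)
    (heq : ∀ s ∈ U, φ s - s * φ' s = c * (Q s - s * Q' s)) :
    ∃ c₁ c₂ : ℝ, c₁ ≠ 0 ∧ ∀ s ∈ U, Q s = c₁ * φ s + c₂ * s := by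
  subst hU
  obtain ⟨c₂, hc₂⟩ := isOpen_Ioo.exists_eq_mul_of_sub_mul_deriv_eq_zero isPreconnected_Ioo h0
    (u := fun s => Q s - c⁻¹ * φ s) (u' := fun s => Q' s - c⁻¹ * φ' s)
    (fun s hs => (hQd s hs).sub ((hφd s hs).const_mul c⁻¹))
    (fun s hs => by field_simp; linear_combination -(heq s hs))
  exact ⟨c⁻¹, c₂, inv_ne_zero hc, fun s hs => by linear_combination hc₂ s hs⟩

theorem stmt_2 (A B : ℝ) (hAB : A < B) (U : Set ℝ) (hU : U = Set.Ioo A B)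
    (h0 : (0 : ℝ) ∉ U)
    (φ φ' Q Q' : ℝ → ℝ)
    (hφd : ∀ s ∈ U, HasDerivAt φ (φ' s) s)
    (hQd : ∀ s ∈ U, HasDerivAt Q (Q' s) s)
    (hne : ∀ s ∈ U, φ s - s * φ' s ≠ 0)
    (hQ : ∀ s ∈ U, Q s = φ' s / (φ s - s * φ' s))
    (c : ℝ) (hc : c ≠ 0)
    (heq : ∀ s ∈ U, φ s - s * φ' s = c * (Q s - s * Q' s)) :
    ∃ c₁ c₂ : ℝ, c₁ ≠ 0 ∧ ∀ s ∈ U, Q s = c₁ * φ s + c₂ * s :=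
  stmt_2_general A B U hU h0 φ φ' Q Q' hφd hQd c hc heq
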